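/- arXiv:0707.0835 — 13 statements merged into one kernel-verified Lean document; each statement's English description precedes it below -/
import Mathlib

section
/- Let K be a field, m a natural number, and M an m×m matrix over K. Then in the ring K⟦t⟧ of formal power series over K, one has det(I − M·t) · (∑_{n∈ℕ} s(Mⁿ) tⁿ) = s(adj(I − M·t)), where the polynomials det(I − M·t) and s(adj(I − M·t)) in K[t] are regarded as power series. In particular, the power series ∑_{n∈ℕ} s(Mⁿ) tⁿ is rational: there exist polynomials p, q ∈ K[t] with q(0) = 1 and q · ∑_{n∈ℕ} s(Mⁿ) tⁿ = p in K⟦t⟧. -/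
/-!
Over `R⟦t⟧` the matrix `1 - t • M` is invertible with inverse the geometric series
`∑ Mⁿ tⁿ`, so its adjugate is `det (1 - t • M) • ∑ Mⁿ tⁿ`. Summing the entries gives the
identity, and `q = det (1 - t • M)`, the reversed characteristic polynomial, has constant term `1`.
-/

open Polynomial Matrix

/-- The sum of all entries of a square matrix. -/
def matS {ι R : Type*} [Fintype ι] [CommRing R] (M : Matrix ι ι R) : R :=
  ∑ i, ∑ j, M i j

open scoped PowerSeries

section matS

variable {ι R S : Type*} [Fintype ι] [CommRing R] [CommRing S]

theorem matS_smul (c : R) (N : Matrix ι ι R) : matS (c • N) = c * matS N := by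
  simp [matS, Finset.mul_sum]

theorem matS_map (f : R →+* S) (N : Matrix ι ι R) : matS (N.map f) = f (matS N) := by
  simp [matS, map_sum]

end matS

namespace Matrix

variable {ι R : Type*} [DecidableEq ι] [CommRing R]

theorem map_one_sub_X_smul_map_C (M : Matrix ι ι R) :
    (1 - (X : R[X]) • M.map C).map Polynomial.coeToPowerSeries.ringHom =
      1 - (PowerSeries.X : R⟦X⟧) • M.map PowerSeries.C := by
  ext i j : 1
  simp [one_apply, apply_ite, mul_comm (PowerSeries.C _)]

variable [Fintype ι]

theorem adjugate_eq_det_smul_of_mul_eq_one {A N : Matrix ι ι R} (h : A * N = 1) :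
    adjugate A = det A • N := by
  rw [← mul_one (adjugate A), ← h, ← Matrix.mul_assoc, adjugate_mul, Matrix.smul_mul,
    Matrix.one_mul]

def geomSeries (M : Matrix ι ι R) : Matrix ι ι R⟦X⟧ :=
  of fun i j => PowerSeries.mk fun n => (M ^ n) i j

theorem geomSeries_eq_one_add (M : Matrix ι ι R) :
    geomSeries M = 1 + ((PowerSeries.X : R⟦X⟧) • M.map PowerSeries.C) * geomSeries M := by
  ext i k (_ | n)
  · rcases eq_or_ne i k with rfl | h <;> simp [geomSeries, mul_apply, one_apply, *]
  · simp [geomSeries, one_apply, apply_ite, mul_apply, PowerSeries.coeff_succ_X_mul,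
      PowerSeries.coeff_C_mul, pow_succ']

theorem one_sub_X_smul_mul_geomSeries (M : Matrix ι ι R) :
    (1 - (PowerSeries.X : R⟦X⟧) • M.map PowerSeries.C) * geomSeries M = 1 := by
  rw [sub_mul, Matrix.one_mul]
  nth_rewrite 1 [geomSeries_eq_one_add M]
  exact add_sub_cancel_right _ _

theorem matS_geomSeries (M : Matrix ι ι R) :
    matS M.geomSeries = PowerSeries.mk fun n => matS (M ^ n) := by
  ext n
  simp [matS, geomSeries, map_sum]

theorem charpolyRev_mul_mk_matS_pow (M : Matrix ι ι R) :
    (M.charpolyRev : R⟦X⟧) * PowerSeries.mk (fun n => matS (M ^ n)) =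
      matS (1 - (X : R[X]) • M.map C).adjugate := by
  set A := 1 - (PowerSeries.X : R⟦X⟧) • M.map PowerSeries.C
  have hmap : (1 - (X : R[X]) • M.map C).map coeToPowerSeries.ringHom = A :=
    map_one_sub_X_smul_map_C M
  calc (M.charpolyRev : R⟦X⟧) * PowerSeries.mk (fun n => matS (M ^ n))
      = det A * matS (geomSeries M) := by
        rw [matS_geomSeries, charpolyRev, ← coeToPowerSeries.ringHom_apply, RingHom.map_det,
          RingHom.mapMatrix_apply, hmap]
    _ = matS (adjugate A) := by
        rw [adjugate_eq_det_smul_of_mul_eq_one (one_sub_X_smul_mul_geomSeries M), matS_smul]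
    _ = _ := by
        rw [← hmap, ← RingHom.mapMatrix_apply, ← RingHom.map_adjugate, RingHom.mapMatrix_apply,
          matS_map, coeToPowerSeries.ringHom_apply]

end Matrix

theorem stmt0 {K : Type*} [Field K] (m : ℕ) (M : Matrix (Fin m) (Fin m) K) :
    ((((1 : Matrix (Fin m) (Fin m) K[X]) - (X : K[X]) • M.map C).det :
        PowerSeries K) *
      PowerSeries.mk (fun n => matS (M ^ n)) =
      ((matS (((1 : Matrix (Fin m) (Fin m) K[X]) - (X : K[X]) • M.map C).adjugate) :
        K[X]) : PowerSeries K)) ∧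
    ∃ p q : K[X], q.eval 0 = 1 ∧
      (q : PowerSeries K) * PowerSeries.mk (fun n => matS (M ^ n)) = (p : PowerSeries K) :=
  ⟨M.charpolyRev_mul_mk_matS_pow, _, M.charpolyRev, M.eval_charpolyRev,
    M.charpolyRev_mul_mk_matS_pow⟩
end

section
/- Let R be a commutative ring, m a natural number, and M an m×m matrix over R. Then s(adj(M)) = ∑_{σ ∈ S_m} sgn(σ) · F((M_{i,σ(i)})_{i ∈ {1,…,m}}), where the sum is over all permutations σ of {1,…,m}. -/
open Matrix

/-- `Ffam s x = ∑_{i ∈ s} ∏_{j ∈ s \ {i}} x j`. -/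
def Ffam {ι R : Type*} [DecidableEq ι] [CommRing R] (s : Finset ι) (x : ι → R) : R :=
  ∑ i ∈ s, ∏ j ∈ s.erase i, x j

/-! Replacing a row of `M` by the all-ones vector turns the Leibniz expansion into one term of
`F`; summing those determinants over the rows is, by Cramer's rule for `Mᵀ` and `b = 1`,
the sum of all entries of `adj M`. -/

namespace Matrix

variable {n R : Type*} [Fintype n] [CommRing R]

theorem matS_transpose (M : Matrix n n R) : matS Mᵀ = matS M :=
  Finset.sum_comm

theorem matS_eq_sum_mulVec_one (M : Matrix n n R) : matS M = ∑ i, (M *ᵥ 1) i := by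
  simp [matS, mulVec, dotProduct]

variable [DecidableEq n]

theorem det_eq_sum_sign_smul_prod_apply (M : Matrix n n R) :
    M.det = ∑ σ : Equiv.Perm n, Equiv.Perm.sign σ • ∏ i, M i (σ i) := by
  rw [← det_transpose, det_apply]
  rfl

theorem matS_adjugate (M : Matrix n n R) : matS M.adjugate = ∑ i, (M.updateRow i 1).det := by
  rw [← matS_transpose, adjugate_transpose, matS_eq_sum_mulVec_one, ← cramer_eq_adjugate_mulVec]
  simp only [cramer_transpose_apply]

theorem prod_updateRow_one_apply (M : Matrix n n R) (i : n) (f : n → n) :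
    ∏ k, M.updateRow i 1 k (f k) = ∏ k ∈ Finset.univ.erase i, M k (f k) := by
  rw [← Finset.mul_prod_erase _ _ (Finset.mem_univ i), updateRow_self, Pi.one_apply, one_mul]
  refine Finset.prod_congr rfl fun k hk => ?_
  rw [updateRow_ne (Finset.ne_of_mem_erase hk)]

theorem det_updateRow_one (M : Matrix n n R) (i : n) :
    (M.updateRow i 1).det =
      ∑ σ : Equiv.Perm n, Equiv.Perm.sign σ • ∏ k ∈ Finset.univ.erase i, M k (σ k) := by
  simp only [det_eq_sum_sign_smul_prod_apply, prod_updateRow_one_apply]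

end Matrix

theorem stmt3 {R : Type*} [CommRing R] (m : ℕ) (M : Matrix (Fin m) (Fin m) R) :
    matS M.adjugate =
      ∑ σ : Equiv.Perm (Fin m),
        (Equiv.Perm.sign σ : ℤ) • Ffam Finset.univ (fun i => M i (σ i)) := by
  simp only [matS_adjugate, det_updateRow_one, Ffam, Finset.smul_sum, Units.smul_def]
  exact Finset.sum_comm
end

section
/- Let R be a commutative ring, m ∈ ℕ, and Z an m×m matrix over R. Then in the polynomial ring R[u], det(Z − u·I) = ∑_{r=0}^{m} (−1)^r d_r u^r, where d_r = ∑_{R' ⊆ {1,…,m}, |R'| = r} det(Z∖R') and Z∖R' denotes the matrix obtained from Z by deleting the i-th row and i-th column for every i ∈ R'. -/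
/-! Up to the sign `(-1) ^ m`, `det (Z - u • 1)` is the characteristic polynomial of `Z`, whose
coefficient of `u ^ (m - k)` is `(-1) ^ k` times the sum of the `k × k` principal minors
(`Matrix.charpoly_coeff_eq_sum_minors`). Indexing these minors by the complement `R'` of the kept
index set gives the formula. -/

open Matrix Polynomial

theorem Finset.sum_powersetCard_compl {α β : Type*} [Fintype α] [DecidableEq α]
    [AddCommMonoid β] {k : ℕ} (hk : k ≤ Fintype.card α) (f : Finset α → β) :
    ∑ s ∈ univ.powersetCard (Fintype.card α - k), f s = ∑ s ∈ univ.powersetCard k, f sᶜ := by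
  refine (sum_nbij' (compl : Finset α → Finset α) compl ?_ ?_ ?_ ?_ ?_).symm <;>
    simp +contextual [card_compl]
  omega

namespace Matrix

variable {R n : Type*} [CommRing R] [Fintype n] [DecidableEq n]

theorem det_map_C_sub_X_smul_one (M : Matrix n n R) :
    (M.map C - (X : R[X]) • 1).det = (-1) ^ Fintype.card n * M.charpoly := by
  rw [charpoly, ← det_neg, charmatrix, neg_sub, scalar_apply, smul_one_eq_diagonal,
    RingHom.mapMatrix_apply]

theorem charpoly_coeff_eq_sum_minors_compl (M : Matrix n n R) {r : ℕ} (hr : r ≤ Fintype.card n) :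
    M.charpoly.coeff r = (-1) ^ (Fintype.card n - r) * ∑ s ∈ Finset.univ.powersetCard r,
      (M.submatrix (Subtype.val : ↥sᶜ → n) Subtype.val).det := by
  conv_lhs => rw [← Nat.sub_sub_self hr]
  rw [charpoly_coeff_eq_sum_minors M _ (Nat.sub_le _ _), Finset.sum_powersetCard_compl hr]

theorem det_map_C_sub_X_smul_one_eq_sum_minors (M : Matrix n n R) :
    (M.map C - (X : R[X]) • 1).det =
      ∑ r ∈ Finset.range (Fintype.card n + 1), (-1 : R[X]) ^ r *
        C (∑ s ∈ Finset.univ.powersetCard r,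
            (M.submatrix (Subtype.val : ↥sᶜ → n) Subtype.val).det) * X ^ r := by
  nontriviality R
  rw [det_map_C_sub_X_smul_one, M.charpoly.as_sum_range_C_mul_X_pow' (n := Fintype.card n + 1)
    (by simp), Finset.mul_sum]
  refine Finset.sum_congr rfl fun r hr_mem => ?_
  have hr : r ≤ Fintype.card n := Nat.lt_succ_iff.mp (Finset.mem_range.mp hr_mem)
  have hsign : (-1 : R[X]) ^ Fintype.card n * (-1) ^ (Fintype.card n - r) = (-1) ^ r := by
    rw [← pow_add, show Fintype.card n + (Fintype.card n - r) = r + 2 * (Fintype.card n - r) by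
      omega, pow_add, pow_mul, neg_one_sq, one_pow, mul_one]
  rw [charpoly_coeff_eq_sum_minors_compl M hr, C_mul, C_pow, C_neg, C_1, ← hsign]
  ring

end Matrix

theorem stmt4 {R : Type*} [CommRing R] (m : ℕ) (Z : Matrix (Fin m) (Fin m) R) :
    (Z.map C - (X : R[X]) • 1).det =
      ∑ r ∈ Finset.range (m + 1), (-1 : R[X]) ^ r *
        C (∑ R' ∈ Finset.powersetCard r (Finset.univ : Finset (Fin m)),
            (Z.submatrix (fun i : {i // i ∈ R'ᶜ} => (i : Fin m))
              (fun i : {i // i ∈ R'ᶜ} => (i : Fin m))).det) * X ^ r := by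
  simpa using Z.det_map_C_sub_X_smul_one_eq_sum_minors
end

section
/- Let R be a commutative ring, m ∈ ℕ, and Z an m×m matrix over R. Then in the polynomial ring R[u], s(adj(Z − u·I)) = ∑_{r=0}^{m} (−1)^r e_r u^r, where e_r = ∑_{R' ⊆ {1,…,m}, |R'| = r} s(adj(Z∖R')) and Z∖R' denotes the matrix obtained from Z by deleting the i-th row and i-th column for every i ∈ R'. -/
open Matrix Polynomial

/-!
By the matrix determinant lemma `det (A + u vᵀ) = det A + vᵀ adj(A) u`, with `u = v = 1` the entry
sum of the adjugate is `s(adj A) = det (A + J) - det A`, where `J` is the all-ones matrix.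
Expanding `det (c • 1 + M)` by multilinearity in the rows gives `∑ c ^ |R'| det (M ∖ R')`.
Applying this to `M = Z` and `M = Z + J` with `c = -u` and subtracting yields the theorem, because
`(Z + J) ∖ R' = Z ∖ R' + J`.
-/

namespace Matrix

variable {n R : Type*} [Fintype n] [DecidableEq n] [CommRing R]

theorem det_of_piecewise_smul (s : Finset n) (c : n → R) (w A : n → n → R) :
    det (of (s.piecewise (fun i => c i • w i) A)) =
      (∏ i ∈ s, c i) * det (of (s.piecewise w A)) := by
  have h : s.piecewise (fun i => c i • w i) A =
      fun i => (if i ∈ s then c i else 1) • s.piecewise w A i := by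
    funext i
    by_cases hi : i ∈ s <;> simp [hi]
  rw [h]
  exact ((detRowAlternating : (n → R) [⋀^n]→ₗ[R] R).map_smul_univ _ _).trans
    (by rw [Finset.prod_ite_mem, Finset.univ_inter, smul_eq_mul]; rfl)

theorem det_add_vecMulVec (A : Matrix n n R) (u v : n → R) :
    (A + vecMulVec u v).det = A.det + v ⬝ᵥ (A.adjugate *ᵥ u) := by
  have hexpand : (A + vecMulVec u v).det =
      ∑ s : Finset n, (∏ i ∈ s, u i) * det (of (s.piecewise (fun _ => v) A.row)) := by
    rw [add_comm]
    refine ((detRowAlternating : (n → R) [⋀^n]→ₗ[R] R).map_add_univ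
      (fun i => u i • v) A.row).trans (Finset.sum_congr rfl fun s _ => ?_)
    exact det_of_piecewise_smul s u (fun _ => v) A.row
  -- two rows equal to `v` make a term vanish, so only `∅` and the singletons contribute
  have hvanish : ∀ s : Finset n, s.Nontrivial →
      det (of (s.piecewise (fun _ => v) A.row)) = 0 := by
    rintro s ⟨i, hi, j, hj, hij⟩
    exact (detRowAlternating : (n → R) [⋀^n]→ₗ[R] R).map_eq_zero_of_eq
      (s.piecewise (fun _ => v) A.row) (by simp [Finset.mem_coe.1 hi, Finset.mem_coe.1 hj]) hij
  set T : Finset (Finset n) :=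
    insert ∅ (Finset.univ.map ⟨singleton, Finset.singleton_injective⟩)
  rw [hexpand, ← Finset.sum_subset (Finset.subset_univ T) ?vanish, Finset.sum_insert ?notMem,
    Finset.sum_map]
  case vanish =>
    intro s _ hs
    simp only [T, Finset.mem_insert, Finset.mem_map, Finset.mem_univ, true_and, not_or,
      not_exists] at hs
    obtain ⟨a, rfl⟩ | hs' :=
      (Finset.nonempty_iff_ne_empty.2 hs.1).exists_eq_singleton_or_nontrivial
    · exact absurd rfl (hs.2 a)
    · rw [hvanish s hs', mul_zero]
  case notMem => simp
  simp only [Finset.prod_empty, one_mul, Finset.piecewise_empty, Finset.prod_singleton,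
    Function.Embedding.coeFn_mk, Finset.piecewise_singleton]
  congr 1
  rw [dotProduct_mulVec, dotProduct_comm, dotProduct]
  refine Finset.sum_congr rfl fun i _ => ?_
  rw [← mulVec_transpose, adjugate_transpose, ← cramer_eq_adjugate_mulVec, cramer_transpose_apply]
  rfl

theorem det_smul_one_add (c : R) (M : Matrix n n R) :
    (c • (1 : Matrix n n R) + M).det =
      ∑ s : Finset n, c ^ s.card * (M.submatrix (Subtype.val : ↥sᶜ → n) Subtype.val).det := by
  refine ((detRowAlternating : (n → R) [⋀^n]→ₗ[R] R).map_add_univ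
    (fun i => c • (1 : Matrix n n R).row i) M.row).trans (Finset.sum_congr rfl fun s _ => ?_)
  rw [← det_piecewise_one_eq_submatrix_det, Finset.piecewise_compl]
  exact (det_of_piecewise_smul s (fun _ => c) _ M.row).trans (by rw [Finset.prod_const])

end Matrix

section matS

variable {n R : Type*} [Fintype n] [CommRing R]

theorem matS_map_s5 {S : Type*} [CommRing S] (f : R →+* S) (M : Matrix n n R) :
    matS (M.map f) = f (matS M) := by
  simp [matS, map_sum]

variable [DecidableEq n]

theorem det_add_allOnes (A : Matrix n n R) :
    (A + of fun _ _ => 1).det = A.det + matS A.adjugate := by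
  have h := det_add_vecMulVec A 1 1
  simp only [vecMulVec, Pi.one_apply, mul_one] at h
  rw [h]
  simp [matS, dotProduct, mulVec]

theorem matS_adjugate_smul_one_add (c : R) (M : Matrix n n R) :
    matS (c • (1 : Matrix n n R) + M).adjugate =
      ∑ s : Finset n,
        c ^ s.card * matS (M.submatrix (Subtype.val : ↥sᶜ → n) Subtype.val).adjugate := by
  have h := det_add_allOnes (c • (1 : Matrix n n R) + M)
  rw [add_assoc, det_smul_one_add, det_smul_one_add, ← sub_eq_iff_eq_add',
    ← Finset.sum_sub_distrib] at h
  rw [← h]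
  refine Finset.sum_congr rfl fun s _ => ?_
  rw [← mul_sub]
  exact congrArg _ (sub_eq_of_eq_add' (det_add_allOnes _))

end matS

theorem stmt5 {R : Type*} [CommRing R] (m : ℕ) (Z : Matrix (Fin m) (Fin m) R) :
    matS (Z.map C - (X : R[X]) • 1).adjugate =
      ∑ r ∈ Finset.range (m + 1), (-1 : R[X]) ^ r *
        C (∑ R' ∈ Finset.powersetCard r (Finset.univ : Finset (Fin m)),
            matS (Z.submatrix (fun i : {i // i ∈ R'ᶜ} => (i : Fin m))
              (fun i : {i // i ∈ R'ᶜ} => (i : Fin m))).adjugate) * X ^ r := by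
  rw [sub_eq_neg_add, ← neg_smul, matS_adjugate_smul_one_add, ← Finset.powerset_univ,
    Finset.sum_powerset, Finset.card_univ, Fintype.card_fin]
  refine Finset.sum_congr rfl fun r _ => ?_
  rw [map_sum, Finset.mul_sum, Finset.sum_mul]
  refine Finset.sum_congr rfl fun s hs => ?_
  rw [(Finset.mem_powersetCard.1 hs).2, submatrix_map, ← RingHom.mapMatrix_apply,
    ← RingHom.map_adjugate, RingHom.mapMatrix_apply, matS_map_s5, neg_pow]
  ring
end

section
/- Let R be a commutative ring, m ∈ ℕ, Z an m×m matrix over R, u ∈ R (or an indeterminate over R), and σ a permutation of {1,…,m}. Then F((((Z − u·I))_{i,σ(i)})_{i ∈ {1,…,m}}) = ∑_{R' ⊆ Fix(σ)} (−u)^{|R'|} · F((Z_{i,σ(i)})_{i ∈ {1,…,m}∖R'}), where Fix(σ) = {i : σ(i) = i}. -/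
/-!
`Ffam s x` is the value at `0` of the derivative of `∏ j ∈ s, (X + x j)`. Subtracting `u` from the
entries indexed by fixed points of `σ` turns this product, by expanding the factors, into
`∑ R' ⊆ Fix σ, (-u) ^ #R' * ∏ j ∉ R', (X + Z j (σ j))`, and the derivative at `0` is linear.
-/

open Matrix

open Finset Polynomial

section

variable {ι R : Type*} [DecidableEq ι] [CommRing R]

theorem Finset.prod_ite_mem_add (t f : Finset ι) (a : ι → R) (v : R) :
    ∏ j ∈ t, ((if j ∈ f then v else 0) + a j) =
      ∑ S ∈ (t ∩ f).powerset, v ^ S.card * ∏ j ∈ t \ S, a j := by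
  have hprod (S : Finset ι) :
      ∏ j ∈ S, (if j ∈ f then v else 0) = if S ⊆ f then v ^ S.card else 0 := by
    rw [prod_ite_zero, prod_const]; rfl
  have hpow : (t ∩ f).powerset = t.powerset.filter (· ⊆ f) := by
    ext S; simp only [mem_powerset, mem_filter, subset_inter_iff]
  simp only [prod_add, hprod, ite_mul, zero_mul, ← sum_filter, hpow]

theorem Ffam_eq_eval_derivative (s : Finset ι) (x : ι → R) :
    Ffam s x = (derivative (∏ j ∈ s, (X + C (x j)))).eval 0 := by
  simp [Ffam, derivative_prod_finset, eval_finsetSum, eval_prod]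

theorem Ffam_ite_mem_add (s f : Finset ι) (a : ι → R) (v : R) :
    Ffam s (fun i => (if i ∈ f then v else 0) + a i) =
      ∑ S ∈ (s ∩ f).powerset, v ^ S.card * Ffam (s \ S) a := by
  have hfactor : ∏ j ∈ s, (X + C ((if j ∈ f then v else 0) + a j)) =
      ∏ j ∈ s, ((if j ∈ f then C v else 0) + (X + C (a j))) :=
    prod_congr rfl fun j _ => by rw [C_add, apply_ite C, C_0]; ring
  simp only [Ffam_eq_eval_derivative, hfactor, prod_ite_mem_add, derivative_sum, ← C_pow,
    derivative_C_mul, eval_finsetSum, eval_mul, eval_C]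

end

theorem stmt6 {R : Type*} [CommRing R] (m : ℕ) (Z : Matrix (Fin m) (Fin m) R)
    (u : R) (σ : Equiv.Perm (Fin m)) :
    Ffam Finset.univ (fun i => (Z - u • 1) i (σ i)) =
      ∑ R' ∈ (Finset.univ.filter fun i => σ i = i).powerset,
        (-u) ^ R'.card * Ffam (Finset.univ \ R') (fun i => Z i (σ i)) := by
  set fix := Finset.univ.filter fun i => σ i = i
  have hentry (i : Fin m) :
      (Z - u • 1) i (σ i) = (if i ∈ fix then -u else 0) + Z i (σ i) := by
    by_cases h : σ i = i <;> simp [fix, h, Ne.symm, sub_eq_neg_add]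
  simp only [hentry, Ffam_ite_mem_add, univ_inter]
end

section
/- Let M be an m×m matrix over a commutative ring and suppose there exist indices i ≠ j such that the i-th and j-th rows of M are equal and the i-th and j-th columns of M are equal. Then s(adj(M)) = 0. -/
open Matrix

/-!
Summing column `l` of `adj M` replaces row `l` of `M` by the all-ones row inside the cofactor
expansion, so it equals `det (M.updateRow l 1)`. Two equal columns of `M` stay equal after that
update, so every such determinant, and hence the whole sum, vanishes.
-/

namespace Matrix

variable {ι R : Type*} [Fintype ι] [DecidableEq ι] [CommRing R]

theorem sum_adjugate_apply_eq_det_updateRow_one (A : Matrix ι ι R) (l : ι) :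
    ∑ k, A.adjugate k l = (A.updateRow l 1).det := by
  calc ∑ k, A.adjugate k l
      = ∑ k, cramer Aᵀ (Pi.single k 1) l := rfl
    _ = cramer Aᵀ (∑ k, Pi.single k 1) l := by rw [← Finset.sum_apply, sum_cramer]
    _ = (A.updateRow l 1).det := by
      rw [Finset.univ_sum_single, cramer_apply, updateCol_transpose, det_transpose]
      rfl

theorem matS_adjugate_eq_zero_of_col_eq (A : Matrix ι ι R) {i j : ι} (hij : i ≠ j)
    (hcol : ∀ k, A k i = A k j) : matS A.adjugate = 0 := by
  refine Finset.sum_comm.trans (Finset.sum_eq_zero fun l _ => ?_)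
  rw [sum_adjugate_apply_eq_det_updateRow_one]
  refine det_zero_of_column_eq hij fun k => ?_
  by_cases hk : k = l
  · subst hk
    simp only [updateRow_self, Pi.one_apply]
  · simp only [updateRow_ne hk, hcol k]

end Matrix

theorem stmt7_general {R : Type*} [CommRing R] (m : ℕ) (M : Matrix (Fin m) (Fin m) R)
    (i j : Fin m) (hij : i ≠ j)
    (hcol : ∀ k, M k i = M k j) :
    matS M.adjugate = 0 :=
  M.matS_adjugate_eq_zero_of_col_eq hij hcol

theorem stmt7 {R : Type*} [CommRing R] (m : ℕ) (M : Matrix (Fin m) (Fin m) R)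
    (i j : Fin m) (hij : i ≠ j)
    (hrow : ∀ k, M i k = M j k) (hcol : ∀ k, M k i = M k j) :
    matS M.adjugate = 0 :=
  stmt7_general m M i j hij hcol
end

section
/- Let 𝒜 be a finite category that is equivalent (as a category) to a finite category ℬ whose matrix Z_ℬ is invertible over ℚ. Then 𝒜 admits a weighting and a coweighting, and for every weighting w^• and every coweighting w_• on 𝒜, ∑_i w^i = ∑_i w_i = s(Z_ℬ⁻¹). In particular, 𝒜 has Euler characteristic and χ(𝒜) = s(Z_ℬ⁻¹). -/
open CategoryTheory Matrix

theorem stmt11 (m n : ℕ) [Category (Fin m)] [Category (Fin n)]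
    [∀ i j : Fin m, Fintype (i ⟶ j)] [∀ i j : Fin n, Fintype (i ⟶ j)]
    (e : Fin m ≌ Fin n)
    (hinv : IsUnit (Matrix.of fun i j : Fin n => (Fintype.card (i ⟶ j) : ℚ)).det) :
    let ZA : Matrix (Fin m) (Fin m) ℚ := Matrix.of fun i j => (Fintype.card (i ⟶ j) : ℚ)
    let ZB : Matrix (Fin n) (Fin n) ℚ := Matrix.of fun i j => (Fintype.card (i ⟶ j) : ℚ)
    (∃ w : Fin m → ℚ, ZA.mulVec w = 1) ∧
    (∃ v : Fin m → ℚ, Matrix.vecMul v ZA = 1) ∧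
    (∀ w : Fin m → ℚ, ZA.mulVec w = 1 → ∑ i, w i = matS ZB⁻¹) ∧
    (∀ v : Fin m → ℚ, Matrix.vecMul v ZA = 1 → ∑ i, v i = matS ZB⁻¹) := by
  intro ZA ZB
  set F := e.functor with hF
  set G := e.inverse with hG
  -- key card identities
  have hcard1 : ∀ (i : Fin m) (k : Fin n), ZA i (G.obj k) = ZB (F.obj i) k := by
    intro i k
    show (Fintype.card (i ⟶ G.obj k) : ℚ) = Fintype.card (F.obj i ⟶ k)
    congr 1
    exact Fintype.card_congr
      (e.fullyFaithfulFunctor.homEquiv.trans (e.counitIso.app k).homToEquiv)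
  have hcard2 : ∀ (k : Fin n) (j : Fin m), ZA (G.obj k) j = ZB k (F.obj j) := by
    intro k j
    show (Fintype.card (G.obj k ⟶ j) : ℚ) = Fintype.card (k ⟶ F.obj j)
    congr 1
    exact Fintype.card_congr
      (e.fullyFaithfulFunctor.homEquiv.trans (e.counitIso.app k).homFromEquiv)
  have hZB : ZB * ZB⁻¹ = 1 := Matrix.mul_nonsing_inv _ hinv
  have hZB' : ZB⁻¹ * ZB = 1 := Matrix.nonsing_inv_mul _ hinv
  -- the weighting and coweighting on B
  set wB : Fin n → ℚ := ZB⁻¹.mulVec 1 with hwB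
  set vB : Fin n → ℚ := Matrix.vecMul 1 ZB⁻¹ with hvB
  have hwB1 : ZB.mulVec wB = 1 := by
    rw [hwB, Matrix.mulVec_mulVec, hZB, Matrix.one_mulVec]
  have hvB1 : Matrix.vecMul vB ZB = 1 := by
    rw [hvB, Matrix.vecMul_vecMul, hZB', Matrix.vecMul_one]
  have hsum_wB : ∑ k, wB k = matS ZB⁻¹ := by
    simp [hwB, matS, Matrix.mulVec, dotProduct]
  have hsum_vB : ∑ k, vB k = matS ZB⁻¹ := by
    simp only [hvB, matS, Matrix.vecMul, dotProduct, Pi.one_apply, one_mul]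
    exact Finset.sum_comm

  -- transported weighting and coweighting on A
  set wA : Fin m → ℚ := fun i => ∑ k, if G.obj k = i then wB k else 0 with hwA
  set vA : Fin m → ℚ := fun i => ∑ k, if G.obj k = i then vB k else 0 with hvA
  have hwA1 : ZA.mulVec wA = 1 := by
    funext i
    have : ZA.mulVec wA i = ∑ k, ZA i (G.obj k) * wB k := by
      rw [Matrix.mulVec]
      simp only [dotProduct, hwA, Finset.mul_sum, mul_ite, mul_zero]
      rw [Finset.sum_comm]
      refine Finset.sum_congr rfl fun k _ => ?_
      simp [Finset.sum_ite_eq' Finset.univ (G.obj k) (fun j => ZA i j * wB k)]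
    rw [this]
    have : ∑ k, ZA i (G.obj k) * wB k = ZB.mulVec wB (F.obj i) := by
      rw [Matrix.mulVec]
      exact Finset.sum_congr rfl fun k _ => by rw [hcard1]
    rw [this, hwB1]; rfl
  have hvA1 : Matrix.vecMul vA ZA = 1 := by
    funext j
    have : Matrix.vecMul vA ZA j = ∑ k, vB k * ZA (G.obj k) j := by
      rw [Matrix.vecMul]
      simp only [dotProduct, hvA, Finset.sum_mul, ite_mul, zero_mul]
      rw [Finset.sum_comm]
      refine Finset.sum_congr rfl fun k _ => ?_
      simp [Finset.sum_ite_eq' Finset.univ (G.obj k) (fun i => vB k * ZA i j)]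
    rw [this]
    have : ∑ k, vB k * ZA (G.obj k) j = Matrix.vecMul vB ZB (F.obj j) := by
      rw [Matrix.vecMul]
      exact Finset.sum_congr rfl fun k _ => by rw [hcard2]
    rw [this, hvB1]; rfl
  have hsum_wA : ∑ i, wA i = matS ZB⁻¹ := by
    rw [hwA]
    rw [Finset.sum_comm]
    rw [← hsum_wB]
    exact Finset.sum_congr rfl fun k _ => by simp
  have hsum_vA : ∑ i, vA i = matS ZB⁻¹ := by
    rw [hvA, Finset.sum_comm, ← hsum_vB]
    exact Finset.sum_congr rfl fun k _ => by simp
  refine ⟨⟨wA, hwA1⟩, ⟨vA, hvA1⟩, ?_, ?_⟩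
  · intro w hw
    have h1 : vA ⬝ᵥ (ZA.mulVec w) = ∑ i, w i := by
      rw [Matrix.dotProduct_mulVec, hvA1]; simp [dotProduct]
    have h2 : vA ⬝ᵥ (ZA.mulVec w) = ∑ i, vA i := by
      rw [hw]; simp [dotProduct]
    rw [← h1, h2, hsum_vA]
  · intro v hv
    have h1 : v ⬝ᵥ (ZA.mulVec wA) = ∑ i, v i := by
      rw [hwA1]; simp [dotProduct]
    have h2 : v ⬝ᵥ (ZA.mulVec wA) = ∑ i, wA i := by
      rw [Matrix.dotProduct_mulVec, hv]; simp [dotProduct]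
    rw [← h1, h2, hsum_wA]
end

section
/- Let 𝒜 be a finite category that is equivalent (as a category) to a finite category ℬ whose matrix Z_ℬ is invertible over ℚ. Let f_𝒜(t) = ∑_{n∈ℕ} s((Z_𝒜 − I)ⁿ) tⁿ ∈ ℚ⟦t⟧. Then 𝒜 has series Euler characteristic: there exist polynomials p, q ∈ ℚ[t] with q(−1) ≠ 0 and q · f_𝒜 = p in ℚ⟦t⟧, and moreover p(−1)/q(−1) = s(Z_ℬ⁻¹). That is, χ_Σ(𝒜) is defined and equals χ(𝒜) = s(Z_ℬ⁻¹). -/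
/-!
The object map `φ` of the equivalence identifies `Z_𝒜` with `P Z_ℬ Pᵀ`, where `P` is the
incidence matrix of `φ`; since `Z_ℬ` is invertible, `ℬ` is skeletal and `φ` is onto, so
`D = PᵀP` is the invertible diagonal matrix of fibre sizes. Then `(Z_𝒜 - 1) P = P (Z_ℬ D - 1)`,
which turns `s((Z_𝒜 - 1)ⁿ)` into `c ⬝ (Z_ℬ D - 1)ⁿ 1` with `c` the vector of fibre sizes.
For any matrix `M`, `∑ₙ Mⁿ tⁿ = adj(1 - tM) / det(1 - tM)` entrywise, so such a series is
rational with denominator `det(1 - tM)`; at `t = -1` it takes the value `c ⬝ (Z_ℬ D)⁻¹ 1`,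
and `c = 1ᵀ D` makes this `1 ⬝ Z_ℬ⁻¹ 1 = s(Z_ℬ⁻¹)`.
-/

open CategoryTheory Matrix Polynomial

open Finset

theorem matS_eq_one_dotProduct_mulVec_one {ι R : Type*} [Fintype ι] [CommRing R]
    (M : Matrix ι ι R) : matS M = 1 ⬝ᵥ (M *ᵥ 1) := by
  simp [matS, dotProduct, mulVec]

namespace Matrix

section PowerSeries

variable {ι R : Type*} [DecidableEq ι] [CommRing R]

theorem map_one_sub_X_smul (M : Matrix ι ι R) :
    (1 - (X : R[X]) • M.map C).map coeToPowerSeries.ringHom =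
      1 - (PowerSeries.X : PowerSeries R) • M.map PowerSeries.C := by
  ext k l : 1
  by_cases h : k = l <;> simp [h] <;> ring

theorem map_evalRingHom_one_sub_X_smul (M : Matrix ι ι R) (a : R) :
    (1 - (X : R[X]) • M.map C).map (evalRingHom a) = 1 - a • M := by
  ext k l : 1
  by_cases h : k = l <;> simp [h] <;> ring

variable [Fintype ι]

def powSeries (M : Matrix ι ι R) : Matrix ι ι (PowerSeries R) :=
  of fun k l => PowerSeries.mk fun j => (M ^ j) k l

theorem one_sub_X_smul_mul_powSeries (M : Matrix ι ι R) :
    (1 - (PowerSeries.X : PowerSeries R) • M.map PowerSeries.C) * M.powSeries = 1 := by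
  rw [sub_mul, Matrix.one_mul, smul_mul]
  ext k l (_ | d)
  · by_cases h : k = l <;> simp [powSeries, one_apply, h]
  · simp [powSeries, mul_apply, PowerSeries.coeff_succ_X_mul, pow_succ', PowerSeries.coeff_C_mul,
      one_apply, apply_ite]

theorem adjugate_one_sub_X_smul_map (M : Matrix ι ι R) :
    (1 - (X : R[X]) • M.map C).adjugate.map coeToPowerSeries.ringHom =
      ((1 - (X : R[X]) • M.map C).det : PowerSeries R) • M.powSeries := by
  rw [← RingHom.mapMatrix_apply, RingHom.map_adjugate, ← coeToPowerSeries.ringHom_apply,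
    RingHom.map_det, RingHom.mapMatrix_apply, map_one_sub_X_smul]
  set A := 1 - (PowerSeries.X : PowerSeries R) • M.map PowerSeries.C
  calc A.adjugate = A.adjugate * (A * M.powSeries) := by
        rw [one_sub_X_smul_mul_powSeries, Matrix.mul_one]
    _ = A.det • M.powSeries := by rw [← Matrix.mul_assoc, adjugate_mul, smul_one_mul]

theorem dotProduct_powSeries_mulVec (M : Matrix ι ι R) (u v : ι → R) :
    (PowerSeries.C ∘ u) ⬝ᵥ (M.powSeries *ᵥ (PowerSeries.C ∘ v)) =
      PowerSeries.mk (fun j => u ⬝ᵥ (M ^ j *ᵥ v)) := by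
  ext d
  simp [dotProduct, mulVec, powSeries, PowerSeries.coeff_C_mul, PowerSeries.coeff_mul_C, map_sum]

theorem det_mul_mk_dotProduct_pow_mulVec (M : Matrix ι ι R) (u v : ι → R) :
    ((1 - (X : R[X]) • M.map C).det : PowerSeries R) *
        PowerSeries.mk (fun j => u ⬝ᵥ (M ^ j *ᵥ v)) =
      (((C ∘ u) ⬝ᵥ ((1 - (X : R[X]) • M.map C).adjugate *ᵥ (C ∘ v)) : R[X]) :
        PowerSeries R) := by
  set σ : R[X] →+* PowerSeries R := coeToPowerSeries.ringHom
  have hσC : σ.comp C = PowerSeries.C := by ext; simp [σ]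
  rw [← coeToPowerSeries.ringHom_apply (φ := _ ⬝ᵥ _), RingHom.map_dotProduct,
    show σ ∘ (_ *ᵥ _) = _ from funext (RingHom.map_mulVec σ _ _), adjugate_one_sub_X_smul_map,
    ← Function.comp_assoc, ← Function.comp_assoc, ← RingHom.coe_comp, hσC, smul_mulVec,
    dotProduct_smul, smul_eq_mul, dotProduct_powSeries_mulVec]

theorem exists_mul_mk_dotProduct_pow_mulVec_eq {K : Type*} [Field K] (M : Matrix ι ι K)
    (u v : ι → K) (hM : IsUnit (1 + M).det) :
    ∃ p q : K[X], q.eval (-1) ≠ 0 ∧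
      (q : PowerSeries K) * PowerSeries.mk (fun j => u ⬝ᵥ (M ^ j *ᵥ v)) = p ∧
      p.eval (-1) / q.eval (-1) = u ⬝ᵥ ((1 + M)⁻¹ *ᵥ v) := by
  set A := 1 - (X : K[X]) • M.map C
  have hA : A.map (evalRingHom (-1)) = 1 + M := by
    rw [map_evalRingHom_one_sub_X_smul, neg_smul, one_smul, sub_neg_eq_add]
  have hq : A.det.eval (-1) = (1 + M).det := by
    rw [← coe_evalRingHom, RingHom.map_det, RingHom.mapMatrix_apply, hA]
  have hp : ((C ∘ u) ⬝ᵥ (A.adjugate *ᵥ (C ∘ v))).eval (-1) = u ⬝ᵥ ((1 + M).adjugate *ᵥ v) := by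
    rw [← coe_evalRingHom, RingHom.map_dotProduct,
      show evalRingHom (-1 : K) ∘ (_ *ᵥ _) = _ from funext (RingHom.map_mulVec _ _ _),
      ← RingHom.mapMatrix_apply, RingHom.map_adjugate, RingHom.mapMatrix_apply, hA]
    simp only [Function.comp_def, coe_evalRingHom, eval_C]
  refine ⟨_, A.det, hq ▸ hM.ne_zero, det_mul_mk_dotProduct_pow_mulVec M u v, ?_⟩
  rw [hp, hq, inv_def, Ring.inverse_eq_inv', smul_mulVec, dotProduct_smul, smul_eq_mul,
    div_eq_inv_mul]

end PowerSeries

theorem vecMul_dotProduct_mul_inv_mulVec {κ R : Type*} [Fintype κ] [DecidableEq κ] [CommRing R]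
    (Z D : Matrix κ κ R) (hD : IsUnit D.det) (w v : κ → R) :
    (w ᵥ* D) ⬝ᵥ ((Z * D)⁻¹ *ᵥ v) = w ⬝ᵥ (Z⁻¹ *ᵥ v) := by
  rw [← dotProduct_mulVec, mulVec_mulVec, mul_inv_rev, mul_nonsing_inv_cancel_left _ _ hD]

section Fibres

/- `(1 : Matrix κ κ R).submatrix φ id` is the incidence matrix `P` of `φ : ι → κ`:
`P i k = 1` if `φ i = k` and `0` otherwise. -/

variable {ι κ R : Type*} [DecidableEq κ] [CommRing R]

theorem one_submatrix_id_mul [Fintype κ] {n : Type*} (φ : ι → κ) (Q : Matrix κ n R) :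
    (1 : Matrix κ κ R).submatrix φ id * Q = Q.submatrix φ id := by
  ext; simp [mul_apply, one_apply]

theorem mul_one_submatrix_id [Fintype κ] {m : Type*} (φ : ι → κ) (Q : Matrix m κ R) :
    Q * (1 : Matrix κ κ R).submatrix id φ = Q.submatrix id φ := by
  ext; simp [mul_apply, one_apply]

theorem one_submatrix_id_mulVec_one [Fintype κ] (φ : ι → κ) :
    (1 : Matrix κ κ R).submatrix φ id *ᵥ 1 = 1 := by
  ext; simp [mulVec, dotProduct, one_apply]

variable [Fintype ι]

def fiberCard (φ : ι → κ) (k : κ) : ℕ := #{i | φ i = k}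

theorem fiberCard_ne_zero {φ : ι → κ} (hφ : Function.Surjective φ) (k : κ) :
    fiberCard φ k ≠ 0 := by
  obtain ⟨i, rfl⟩ := hφ k
  exact (card_pos.mpr ⟨i, by simp⟩).ne'

theorem one_vecMul_one_submatrix_id (φ : ι → κ) :
    1 ᵥ* (1 : Matrix κ κ R).submatrix φ id = (fiberCard φ · : κ → R) := by
  ext; simp [vecMul, dotProduct, one_apply, fiberCard]

theorem transpose_one_submatrix_mul_self (φ : ι → κ) :
    ((1 : Matrix κ κ R).submatrix φ id)ᵀ * (1 : Matrix κ κ R).submatrix φ id =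
      diagonal fun k => (fiberCard φ k : R) := by
  ext k l
  by_cases h : k = l
  · subst h; simp [mul_apply, one_apply, fiberCard, eq_comm, ← ite_and]
  · rw [diagonal_apply_ne _ h, mul_apply]
    refine sum_eq_zero fun i _ => ?_
    by_cases hi : φ i = k <;> simp [one_apply, hi, h]

variable [Fintype κ] [DecidableEq ι]

theorem submatrix_sub_one_mul_one_submatrix (Z : Matrix κ κ R) (φ : ι → κ) :
    (Z.submatrix φ φ - 1) * (1 : Matrix κ κ R).submatrix φ id =
      (1 : Matrix κ κ R).submatrix φ id * (Z * diagonal (fiberCard φ · : κ → R) - 1) := by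
  set P := (1 : Matrix κ κ R).submatrix φ id
  have hZ : Z.submatrix φ φ = P * Z * Pᵀ := by
    rw [one_submatrix_id_mul, transpose_submatrix, transpose_one, mul_one_submatrix_id,
      submatrix_submatrix, Function.id_comp, Function.comp_id]
  rw [hZ, ← transpose_one_submatrix_mul_self, Matrix.sub_mul, Matrix.mul_sub, Matrix.one_mul,
    Matrix.mul_one, Matrix.mul_assoc, Matrix.mul_assoc]

theorem submatrix_sub_one_pow_mul_one_submatrix (Z : Matrix κ κ R) (φ : ι → κ) (j : ℕ) :
    (Z.submatrix φ φ - 1) ^ j * (1 : Matrix κ κ R).submatrix φ id =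
      (1 : Matrix κ κ R).submatrix φ id * (Z * diagonal (fiberCard φ · : κ → R) - 1) ^ j := by
  induction j with
  | zero => rw [pow_zero, pow_zero, Matrix.one_mul, Matrix.mul_one]
  | succ j ih =>
    rw [pow_succ, pow_succ, Matrix.mul_assoc, submatrix_sub_one_mul_one_submatrix,
      ← Matrix.mul_assoc, ih, Matrix.mul_assoc]

theorem matS_submatrix_sub_one_pow (Z : Matrix κ κ R) (φ : ι → κ) (j : ℕ) :
    matS ((Z.submatrix φ φ - 1) ^ j) =
      (fiberCard φ · : κ → R) ⬝ᵥ ((Z * diagonal (fiberCard φ · : κ → R) - 1) ^ j *ᵥ 1) := by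
  set P := (1 : Matrix κ κ R).submatrix φ id
  calc matS ((Z.submatrix φ φ - 1) ^ j) = 1 ⬝ᵥ ((Z.submatrix φ φ - 1) ^ j *ᵥ (P *ᵥ 1)) := by
        rw [matS_eq_one_dotProduct_mulVec_one, one_submatrix_id_mulVec_one]
    _ = (1 ᵥ* P) ⬝ᵥ ((Z * diagonal (fiberCard φ · : κ → R) - 1) ^ j *ᵥ 1) := by
        rw [mulVec_mulVec, submatrix_sub_one_pow_mul_one_submatrix, ← mulVec_mulVec,
          dotProduct_mulVec]
    _ = _ := by rw [one_vecMul_one_submatrix_id]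

end Fibres

end Matrix

namespace CategoryTheory

variable (R : Type*) [CommRing R]

def homCardMatrix (C : Type*) [Category C] [∀ i j : C, Fintype (i ⟶ j)] : Matrix C C R :=
  of fun i j => (Fintype.card (i ⟶ j) : R)

variable {R}

theorem homCardMatrix_eq_submatrix {C D : Type*} [Category C] [Category D]
    [∀ i j : C, Fintype (i ⟶ j)] [∀ i j : D, Fintype (i ⟶ j)] (e : C ≌ D) :
    homCardMatrix R C = (homCardMatrix R D).submatrix e.functor.obj e.functor.obj := by
  ext i j
  simp only [homCardMatrix, of_apply, submatrix_apply]
  rw [Fintype.card_congr e.fullyFaithfulFunctor.homEquiv]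

theorem skeletal_of_isUnit_det_homCardMatrix [Nontrivial R] {C : Type*} [Category C] [Fintype C]
    [DecidableEq C] [∀ i j : C, Fintype (i ⟶ j)] (h : IsUnit (homCardMatrix R C).det) :
    Skeletal C := by
  rintro X Y ⟨u⟩
  by_contra hXY
  refine h.ne_zero (det_zero_of_row_eq hXY (funext fun Z => ?_))
  simp only [homCardMatrix, of_apply, Fintype.card_congr u.homFromEquiv]

theorem Equivalence.functor_obj_surjective {C D : Type*} [Category C] [Category D]
    (e : C ≌ D) (hD : Skeletal D) : Function.Surjective e.functor.obj :=
  fun Y => ⟨e.inverse.obj Y, hD ⟨e.counitIso.app Y⟩⟩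

end CategoryTheory

theorem stmt12 (m n : ℕ) [Category (Fin m)] [Category (Fin n)]
    [∀ i j : Fin m, Fintype (i ⟶ j)] [∀ i j : Fin n, Fintype (i ⟶ j)]
    (e : Fin m ≌ Fin n)
    (hinv : IsUnit (Matrix.of fun i j : Fin n => (Fintype.card (i ⟶ j) : ℚ)).det) :
    let ZA : Matrix (Fin m) (Fin m) ℚ := Matrix.of fun i j => (Fintype.card (i ⟶ j) : ℚ)
    let ZB : Matrix (Fin n) (Fin n) ℚ := Matrix.of fun i j => (Fintype.card (i ⟶ j) : ℚ)
    ∃ p q : ℚ[X], q.eval (-1) ≠ 0 ∧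
      (q : PowerSeries ℚ) * PowerSeries.mk (fun k => matS ((ZA - 1) ^ k)) =
        (p : PowerSeries ℚ) ∧
      p.eval (-1) / q.eval (-1) = matS ZB⁻¹ := by
  intro ZA ZB
  set φ := e.functor.obj
  have hZA : ZA = ZB.submatrix φ φ := homCardMatrix_eq_submatrix e
  have hφ : Function.Surjective φ :=
    e.functor_obj_surjective (skeletal_of_isUnit_det_homCardMatrix hinv)
  set c : Fin n → ℚ := (fiberCard φ · : Fin n → ℚ)
  have hc : IsUnit (diagonal c).det := by
    rw [det_diagonal, isUnit_iff_ne_zero, prod_ne_zero_iff]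
    exact fun k _ => Nat.cast_ne_zero.mpr (fiberCard_ne_zero hφ k)
  have hχ := vecMul_dotProduct_mul_inv_mulVec ZB (diagonal c) hc 1 1
  rw [show 1 ᵥ* diagonal c = c by ext; simp [vecMul_diagonal]] at hχ
  obtain ⟨p, q, hq, hpq, hval⟩ := exists_mul_mk_dotProduct_pow_mulVec_eq (ZB * diagonal c - 1) c 1
    (by rw [add_sub_cancel, det_mul]; exact hinv.mul hc)
  refine ⟨p, q, hq, ?_, ?_⟩
  · simpa only [hZA, matS_submatrix_sub_one_pow] using hpq
  · rw [hval, add_sub_cancel, hχ, matS_eq_one_dotProduct_mulVec_one]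
end

section
/- Let K be a field, m, n ∈ ℕ with n ≤ m, and let c : {1,…,m} → {1,…,n} be a surjection with fibre sizes q_k = |c⁻¹(k)| ≥ 1. Let Z' be an n×n matrix over K and let Z be the m×m matrix defined by Z_{ij} = Z'_{c(i),c(j)}. For 0 ≤ r ≤ m set d_r = ∑_{R' ⊆ {1,…,m}, |R'| = r} det(Z∖R') and e_r = ∑_{R' ⊆ {1,…,m}, |R'| = r} s(adj(Z∖R')). Then d_r = 0 and e_r = 0 for all r < m − n, and d_{m−n} = (q_1 ⋯ q_n) · det(Z') and e_{m−n} = (q_1 ⋯ q_n) · s(adj(Z')). -/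
/-! Let `A` be the `m × n` incidence matrix of `c`, so that `Z = A Z' Aᵀ` and `Aᵀ A = diag q`.
The sum of the principal minors of `W` obtained by deleting `r` rows and columns is the coefficient
of `X ^ r` in `det (X + W)`, the characteristic polynomial of `-W`. For `W = A B` with
`B = Z' Aᵀ`, the identity `charpoly (A B) = X ^ (m - n) * charpoly (B A)` makes these sums vanish
for `r < m - n` and gives `det (B A) = (∏ q) * det Z'` for `r = m - n`. The adjugate sums follow by
running the same argument over `K[t]` for `Z + t J = A (Z' + t J) Aᵀ`, `J` the all-ones matrix,
because the coefficient of `t` in `det (M + t J)` is `s (adj M)` (Jacobi's formula). -/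

open Matrix

open Polynomial Finset

namespace Matrix

theorem one_submatrix_mul_one_submatrix {R m n : Type*} [CommRing R] [Fintype m] [DecidableEq n]
    (c : m → n) :
    (1 : Matrix n n R).submatrix id c * (1 : Matrix n n R).submatrix c id
      = diagonal fun k => (#{i | c i = k} : R) := by
  ext k l
  simp only [mul_apply, submatrix_apply, one_apply, id, ite_zero_mul_ite_zero, mul_one,
    sum_boole, diagonal_apply]
  split_ifs with hkl
  · subst hkl
    congr 2
    ext i
    simp only [mem_filter, mem_univ, true_and, and_iff_right_iff_imp]
    exact Eq.symm
  · rw [filter_eq_empty_iff.mpr fun i _ h => hkl (h.1.trans h.2), card_empty, Nat.cast_zero]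

variable {R n : Type*} [CommRing R] [Fintype n] [DecidableEq n]

theorem submatrix_eq_one_submatrix_mul {m : Type*} (Y : Matrix n n R) (c : m → n) :
    Y.submatrix c c
      = (1 : Matrix n n R).submatrix c id * (Y * (1 : Matrix n n R).submatrix id c) := by
  rw [show (id : n → n) = Equiv.refl n from rfl, one_submatrix_mul, mul_submatrix_one]
  rfl

def sumDeletedMinors (r : ℕ) (M : Matrix n n R) : R :=
  ∑ s ∈ powersetCard r (univ : Finset n),
    (M.submatrix (fun i : {i // i ∈ sᶜ} => (i : n)) (fun i : {i // i ∈ sᶜ} => (i : n))).det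

theorem sumDeletedMinors_eq_coeff_charpoly_neg (M : Matrix n n R) {r : ℕ}
    (hr : r ≤ Fintype.card n) : sumDeletedMinors r M = (-M).charpoly.coeff r := by
  have h := charpoly_coeff_eq_sum_minors (-M) (Fintype.card n - r) (Nat.sub_le _ _)
  rw [Nat.sub_sub_self hr] at h
  rw [h, sumDeletedMinors, mul_sum]
  -- Mathlib indexes minors by the kept rows: complement, and the two signs cancel.
  refine sum_nbij' (·ᶜ) (·ᶜ) (fun s hs => ?_) (fun s hs => ?_) (by simp) (by simp) fun s hs => ?_
  · simp only [mem_powersetCard, subset_univ, true_and, card_compl] at hs ⊢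
    omega
  · simp only [mem_powersetCard, subset_univ, true_and, card_compl] at hs ⊢
    omega
  · obtain ⟨-, hs⟩ := mem_powersetCard.mp hs
    change _ = _ * (-(M.submatrix _ _)).det
    rw [det_neg, Fintype.card_coe, card_compl, hs, ← mul_assoc, ← mul_pow]
    simp

theorem coeff_zero_charpoly_neg (M : Matrix n n R) : (-M).charpoly.coeff 0 = M.det := by
  have h := det_eq_sign_charpoly_coeff (-M)
  rw [det_neg] at h
  exact ((isUnit_neg_one.pow _).mul_left_cancel h).symm

theorem charpoly_neg_mul_of_le {m : Type*} [Fintype m] [DecidableEq m]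
    (A : Matrix m n R) (B : Matrix n m R) (h : Fintype.card n ≤ Fintype.card m) :
    (-(A * B)).charpoly = X ^ (Fintype.card m - Fintype.card n) * (-(B * A)).charpoly := by
  rw [← Matrix.mul_neg, ← Matrix.neg_mul, charpoly_mul_comm_of_le _ _ h]

theorem sumDeletedMinors_mul_of_lt {m : Type*} [Fintype m] [DecidableEq m]
    (A : Matrix m n R) (B : Matrix n m R) {r : ℕ} (hr : r < Fintype.card m - Fintype.card n) :
    sumDeletedMinors r (A * B) = 0 := by
  rw [sumDeletedMinors_eq_coeff_charpoly_neg _ (by omega), charpoly_neg_mul_of_le _ _ (by omega),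
    coeff_X_pow_mul', if_neg (by omega)]

theorem sumDeletedMinors_mul_card_sub {m : Type*} [Fintype m] [DecidableEq m]
    (A : Matrix m n R) (B : Matrix n m R) (h : Fintype.card n ≤ Fintype.card m) :
    sumDeletedMinors (Fintype.card m - Fintype.card n) (A * B) = (B * A).det := by
  rw [sumDeletedMinors_eq_coeff_charpoly_neg _ (Nat.sub_le _ _), charpoly_neg_mul_of_le _ _ h,
    coeff_X_pow_mul', if_pos le_rfl, Nat.sub_self, coeff_zero_charpoly_neg]

theorem sumDeletedMinors_submatrix_of_lt {m : Type*} [Fintype m] [DecidableEq m]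
    (Y : Matrix n n R) (c : m → n) {r : ℕ} (hr : r < Fintype.card m - Fintype.card n) :
    sumDeletedMinors r (Y.submatrix c c) = 0 := by
  rw [submatrix_eq_one_submatrix_mul, sumDeletedMinors_mul_of_lt _ _ hr]

theorem sumDeletedMinors_submatrix_card_sub {m : Type*} [Fintype m] [DecidableEq m]
    (Y : Matrix n n R) (c : m → n) (h : Fintype.card n ≤ Fintype.card m) :
    sumDeletedMinors (Fintype.card m - Fintype.card n) (Y.submatrix c c)
      = (∏ k, (#{i | c i = k} : R)) * Y.det := by
  rw [submatrix_eq_one_submatrix_mul, sumDeletedMinors_mul_card_sub _ _ h, Matrix.mul_assoc,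
    one_submatrix_mul_one_submatrix, det_mul, det_diagonal, mul_comm]

theorem det_map_C_add_X_smul (M N : Matrix n n R) :
    det (M.map C + (X : R[X]) • N.map C)
      = ∑ s : Finset n, C (det (of fun i => if i ∈ s then N i else M i)) * X ^ #s := by
  let D : (n → R[X]) [⋀^n]→ₗ[R[X]] R[X] := detRowAlternating
  rw [add_comm]
  change D ((fun i => (X : R[X]) • (N.map C i : n → R[X])) + fun i => M.map C i) = _
  rw [D.map_add_univ]
  refine sum_congr rfl fun s _ => ?_
  let P : n → n → R[X] := fun i j => C ((if i ∈ s then N i else M i) j)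
  have hrows : s.piecewise (fun i => (X : R[X]) • (N.map C i : n → R[X])) (fun i => M.map C i)
      = s.piecewise (fun i => (X : R[X]) • P i) P := by
    funext i j
    by_cases hi : i ∈ s <;> simp [hi, P]
  rw [hrows]
  change D.toMultilinearMap _ = _
  rw [MultilinearMap.map_piecewise_smul, prod_const, smul_eq_mul, mul_comm]
  exact congrArg (· * _) (RingHom.map_det C _).symm

theorem coeff_det_map_C_add_X_smul (M N : Matrix n n R) (k : ℕ) :
    (det (M.map C + (X : R[X]) • N.map C)).coeff k
      = ∑ s ∈ powersetCard k univ, det (of fun i => if i ∈ s then N i else M i) := by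
  simp_rw [det_map_C_add_X_smul, finsetSum_coeff, coeff_C_mul_X_pow, ← sum_filter]
  congr 1
  ext s
  simp [mem_powersetCard, eq_comm]

theorem coeff_zero_det_map_C_add_X_smul (M N : Matrix n n R) :
    (det (M.map C + (X : R[X]) • N.map C)).coeff 0 = M.det := by
  rw [coeff_det_map_C_add_X_smul, powersetCard_zero, sum_singleton]
  rfl

theorem coeff_one_det_map_C_add_X_smul (M N : Matrix n n R) :
    (det (M.map C + (X : R[X]) • N.map C)).coeff 1 = trace (N * adjugate M) := by
  rw [coeff_det_map_C_add_X_smul, powersetCard_one, sum_map]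
  refine sum_congr rfl fun i _ => ?_
  have hrow : (of fun a => if a ∈ ({i} : Finset n) then N a else M a) = M.updateRow i (N i) := by
    ext a b
    by_cases ha : a = i <;> simp [ha]
  change (of fun a => if a ∈ ({i} : Finset n) then N a else M a).det = _
  rw [hrow, ← cramer_transpose_apply, cramer_eq_adjugate_mulVec, ← adjugate_transpose]
  simp [mulVec, dotProduct, mul_apply, mul_comm]

theorem coeff_one_det_map_C_add_X_smul_ones (M : Matrix n n R) :
    (det (M.map C + (X : R[X]) • (of fun _ _ => (1 : R)).map C)).coeff 1 = matS M.adjugate := by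
  rw [coeff_one_det_map_C_add_X_smul, matS]
  simp only [trace, diag_apply, mul_apply, of_apply, one_mul]
  exact sum_comm

theorem coeff_zero_sumDeletedMinors_map_C_add_X_smul (M N : Matrix n n R) (r : ℕ) :
    (sumDeletedMinors r (M.map C + (X : R[X]) • N.map C)).coeff 0 = sumDeletedMinors r M := by
  rw [sumDeletedMinors, finsetSum_coeff]
  exact sum_congr rfl fun s _ => coeff_zero_det_map_C_add_X_smul _ _

theorem coeff_one_sumDeletedMinors_map_C_add_X_smul_ones (M : Matrix n n R) (r : ℕ) :
    (sumDeletedMinors r (M.map C + (X : R[X]) • (of fun _ _ => (1 : R)).map C)).coeff 1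
      = ∑ s ∈ powersetCard r (univ : Finset n),
          matS (M.submatrix (fun i : {i // i ∈ sᶜ} => (i : n))
            (fun i : {i // i ∈ sᶜ} => (i : n))).adjugate := by
  rw [sumDeletedMinors, finsetSum_coeff]
  exact sum_congr rfl fun s _ => coeff_one_det_map_C_add_X_smul_ones _

end Matrix

theorem stmt13_general {K : Type*} [Field K] (m n : ℕ)
    (c : Fin m → Fin n) (hc : Function.Surjective c)
    (Z' : Matrix (Fin n) (Fin n) K)
    (Z : Matrix (Fin m) (Fin m) K) (hZ : ∀ i j, Z i j = Z' (c i) (c j)) :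
    let q : Fin n → ℕ := fun k => (Finset.univ.filter fun i => c i = k).card
    let d : ℕ → K := fun r =>
      ∑ R' ∈ Finset.powersetCard r (Finset.univ : Finset (Fin m)),
        (Z.submatrix (fun i : {i // i ∈ R'ᶜ} => (i : Fin m))
          (fun i : {i // i ∈ R'ᶜ} => (i : Fin m))).det
    let e : ℕ → K := fun r =>
      ∑ R' ∈ Finset.powersetCard r (Finset.univ : Finset (Fin m)),
        matS (Z.submatrix (fun i : {i // i ∈ R'ᶜ} => (i : Fin m))
          (fun i : {i // i ∈ R'ᶜ} => (i : Fin m))).adjugate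
    (∀ k, 1 ≤ q k) ∧
    (∀ r < m - n, d r = 0 ∧ e r = 0) ∧
    d (m - n) = (∏ k, (q k : K)) * Z'.det ∧
    e (m - n) = (∏ k, (q k : K)) * matS Z'.adjugate := by
  intro q d e
  let Y : Matrix (Fin n) (Fin n) K[X] := Z'.map C + (X : K[X]) • (of fun _ _ => (1 : K)).map C
  have hY : Y.submatrix c c = Z.map C + (X : K[X]) • (of fun _ _ => (1 : K)).map C := by
    ext i j
    simp [Y, hZ]
  have hd (r : ℕ) : d r = (sumDeletedMinors r (Y.submatrix c c)).coeff 0 := by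
    rw [hY, coeff_zero_sumDeletedMinors_map_C_add_X_smul]
    rfl
  have he (r : ℕ) : e r = (sumDeletedMinors r (Y.submatrix c c)).coeff 1 := by
    rw [hY, coeff_one_sumDeletedMinors_map_C_add_X_smul_ones]
  have htop := sumDeletedMinors_submatrix_card_sub Y c (Fintype.card_le_of_surjective c hc)
  have hq : ∏ k, (#{i | c i = k} : K[X]) = C (∏ k, (q k : K)) := by simp [q]
  simp only [Fintype.card_fin, hq] at htop
  refine ⟨fun k => ?_, fun r hr => ?_, ?_, ?_⟩
  · obtain ⟨i, rfl⟩ := hc k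
    exact card_pos.2 ⟨i, by simp⟩
  · rw [hd, he, sumDeletedMinors_submatrix_of_lt Y c (by simpa using hr)]
    simp
  · rw [hd, htop, coeff_C_mul, coeff_zero_det_map_C_add_X_smul]
  · rw [he, htop, coeff_C_mul, coeff_one_det_map_C_add_X_smul_ones]

theorem stmt13 {K : Type*} [Field K] (m n : ℕ) (hnm : n ≤ m)
    (c : Fin m → Fin n) (hc : Function.Surjective c)
    (Z' : Matrix (Fin n) (Fin n) K)
    (Z : Matrix (Fin m) (Fin m) K) (hZ : ∀ i j, Z i j = Z' (c i) (c j)) :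
    let q : Fin n → ℕ := fun k => (Finset.univ.filter fun i => c i = k).card
    let d : ℕ → K := fun r =>
      ∑ R' ∈ Finset.powersetCard r (Finset.univ : Finset (Fin m)),
        (Z.submatrix (fun i : {i // i ∈ R'ᶜ} => (i : Fin m))
          (fun i : {i // i ∈ R'ᶜ} => (i : Fin m))).det
    let e : ℕ → K := fun r =>
      ∑ R' ∈ Finset.powersetCard r (Finset.univ : Finset (Fin m)),
        matS (Z.submatrix (fun i : {i // i ∈ R'ᶜ} => (i : Fin m))
          (fun i : {i // i ∈ R'ᶜ} => (i : Fin m))).adjugate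
    (∀ k, 1 ≤ q k) ∧
    (∀ r < m - n, d r = 0 ∧ e r = 0) ∧
    d (m - n) = (∏ k, (q k : K)) * Z'.det ∧
    e (m - n) = (∏ k, (q k : K)) * matS Z'.adjugate :=
  stmt13_general m n c hc Z' Z hZ
end

section
/- Let K be a field, m ∈ ℕ, and M an m×m matrix over K that is diagonalizable, i.e., M = P·D·P⁻¹ for some invertible matrix P and diagonal matrix D over K. Suppose moreover that there exists a row vector w ∈ K^m with w·M = (1,…,1), or a column vector v ∈ K^m with M·v = (1,…,1)ᵀ. Then there exist polynomials p, q ∈ K[t] with q(−1) ≠ 0 and q · (∑_{n∈ℕ} s((M − I)ⁿ) tⁿ) = p in K⟦t⟧. (Applied to M = Z_𝒜 for a finite category 𝒜: if 𝒜 has either a weighting or a coweighting and Z_𝒜 is diagonalizable, then 𝒜 has series Euler characteristic.) -/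
open Matrix Polynomial

lemma geom_series {K : Type*} [Field K] (c r : K) :
    ((1 - C r * X : K[X]) : PowerSeries K) * PowerSeries.mk (fun n => c * r ^ n)
      = ((C c : K[X]) : PowerSeries K) := by
  ext n
  push_cast [Polynomial.coe_sub, Polynomial.coe_one, Polynomial.coe_mul, Polynomial.coe_C,
    Polynomial.coe_X]
  rw [sub_mul, one_mul, mul_assoc]
  cases n with
  | zero => simp
  | succ n =>
      simp [PowerSeries.coeff_succ_X_mul, PowerSeries.coeff_C]
      ring

lemma matS_conj {K : Type*} [Field K] {m : ℕ} (P Q : Matrix (Fin m) (Fin m) K)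
    (e : Fin m → K) :
    matS (P * Matrix.diagonal e * Q) =
      ∑ k, (∑ i, P i k) * e k * (∑ j, Q k j) := by
  have h : ∀ i j, (P * Matrix.diagonal e * Q) i j = ∑ k, P i k * e k * Q k j := by
    intro i j
    rw [Matrix.mul_apply]
    simp only [Matrix.mul_diagonal]
  simp only [matS, h]
  symm
  calc ∑ k, (∑ i, P i k) * e k * (∑ j, Q k j)
      = ∑ k, ∑ i, ∑ j, P i k * e k * Q k j := by
        refine Finset.sum_congr rfl fun k _ => ?_
        rw [Finset.sum_mul, Finset.sum_mul]
        exact Finset.sum_congr rfl fun i _ => Finset.mul_sum ..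
    _ = ∑ i, ∑ k, ∑ j, P i k * e k * Q k j := Finset.sum_comm
    _ = ∑ i, ∑ j, ∑ k, P i k * e k * Q k j :=
        Finset.sum_congr rfl fun i _ => Finset.sum_comm

theorem stmt14 {K : Type*} [Field K] (m : ℕ) (M P : Matrix (Fin m) (Fin m) K)
    (d : Fin m → K) (hP : IsUnit P.det) (hM : M = P * Matrix.diagonal d * P⁻¹)
    (hwv : (∃ w : Fin m → K, Matrix.vecMul w M = 1) ∨
           (∃ v : Fin m → K, M.mulVec v = 1)) :
    ∃ p q : K[X], q.eval (-1) ≠ 0 ∧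
      (q : PowerSeries K) * PowerSeries.mk (fun n => matS ((M - 1) ^ n)) =
        (p : PowerSeries K) := by
  classical
  have hPP : P⁻¹ * P = 1 := Matrix.nonsing_inv_mul P hP
  have hPP' : P * P⁻¹ = 1 := Matrix.mul_nonsing_inv P hP
  set a : Fin m → K := fun k => ∑ i, P i k with ha
  set b : Fin m → K := fun k => ∑ j, P⁻¹ k j with hb
  set c : Fin m → K := fun k => a k * b k with hc
  -- conjugation
  have hsub : M - 1 = P * Matrix.diagonal (fun k => d k - 1) * P⁻¹ := by
    have : (Matrix.diagonal (fun k => d k - 1) : Matrix (Fin m) (Fin m) K)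
        = Matrix.diagonal d - 1 := by
      rw [← Matrix.diagonal_one, Matrix.diagonal_sub]
    rw [this, hM]
    rw [Matrix.mul_sub, Matrix.sub_mul, Matrix.mul_one, hPP']
  have hconj : ∀ A B : Matrix (Fin m) (Fin m) K,
      (P * A * P⁻¹) * (P * B * P⁻¹) = P * (A * B) * P⁻¹ := by
    intro A B
    calc P * A * P⁻¹ * (P * B * P⁻¹) = P * (A * (P⁻¹ * P) * B) * P⁻¹ := by
          simp only [Matrix.mul_assoc]
      _ = P * (A * B) * P⁻¹ := by rw [hPP, Matrix.mul_one]
  have hpow : ∀ n : ℕ, (M - 1) ^ n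
      = P * Matrix.diagonal (fun k => (d k - 1) ^ n) * P⁻¹ := by
    intro n
    induction n with
    | zero => simp [hPP']
    | succ n ih =>
        rw [pow_succ, ih, hsub, hconj, Matrix.diagonal_mul_diagonal]
        have : (fun i => (d i - 1) ^ n * (d i - 1)) = fun i => (d i - 1) ^ (n + 1) :=
          funext fun i => (pow_succ _ _).symm
        rw [this]
  have hfn : ∀ n : ℕ, matS ((M - 1) ^ n) = ∑ k, c k * (d k - 1) ^ n := by
    intro n
    rw [hpow n, matS_conj]
    exact Finset.sum_congr rfl fun k _ => by simp only [hc, ha, hb]; ring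
  -- vanishing of c at zero eigenvalues
  have hc0 : ∀ k, d k = 0 → c k = 0 := by
    intro k hk
    rcases hwv with ⟨w, hw⟩ | ⟨v, hv⟩
    · have hMP : M * P = P * Matrix.diagonal d := by
        rw [hM, Matrix.mul_assoc, Matrix.mul_assoc, hPP, Matrix.mul_one]
      have h1 : Matrix.vecMul (1 : Fin m → K) P
          = Matrix.vecMul w (P * Matrix.diagonal d) := by
        rw [← hw, Matrix.vecMul_vecMul, hMP]
      have h2 : (∑ x, P x k) = ∑ x, w x * (P x k * d k) := by
        simpa [Matrix.vecMul, dotProduct, ← Matrix.vecMul_vecMul,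
          Matrix.vecMul_diagonal] using congrFun h1 k
      have hak : a k = 0 := by show (∑ i : Fin m, P i k) = 0; rw [h2]; simp [hk]
      simp [hc, hak]
    · have hPM : P⁻¹ * M = Matrix.diagonal d * P⁻¹ := by
        rw [hM, ← Matrix.mul_assoc, ← Matrix.mul_assoc, hPP, Matrix.one_mul]
      have h1 : Matrix.mulVec P⁻¹ (1 : Fin m → K)
          = Matrix.mulVec (Matrix.diagonal d * P⁻¹) v := by
        rw [← hv, Matrix.mulVec_mulVec, hPM]
      have h2 : (∑ x, P⁻¹ k x) = ∑ x, d k * P⁻¹ k x * v x := by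
        simpa [Matrix.mulVec, dotProduct, ← Matrix.mulVec_mulVec,
          Matrix.diagonal_mul] using congrFun h1 k
      have hbk : b k = 0 := by show (∑ j : Fin m, P⁻¹ k j) = 0; rw [h2]; simp [hk]
      simp [hc, hbk]
  -- the finset of nonzero eigenvalues
  set s : Finset (Fin m) := Finset.univ.filter (fun k => d k ≠ 0) with hs
  refine ⟨∑ k ∈ s, C (c k) * ∏ j ∈ s.erase k, (1 - C (d j - 1) * X),
    ∏ k ∈ s, (1 - C (d k - 1) * X), ?_, ?_⟩
  · rw [eval_prod]
    have : ∀ k ∈ s, (1 - C (d k - 1) * X).eval (-1) = d k := by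
      intro k _
      simp
    rw [Finset.prod_congr rfl this]
    exact Finset.prod_ne_zero_iff.2 fun k hk => (Finset.mem_filter.1 hk).2
  · have hmk : PowerSeries.mk (fun n => matS ((M - 1) ^ n))
        = ∑ k ∈ s, PowerSeries.mk (fun n => c k * (d k - 1) ^ n) := by
      ext n
      rw [map_sum]
      simp only [PowerSeries.coeff_mk, hfn n]
      symm
      rw [hs]
      refine Finset.sum_filter_of_ne fun k _ h => ?_
      intro hdk
      exact h (by simp [hc0 k hdk])
    have hq : ((∏ k ∈ s, (1 - C (d k - 1) * X) : K[X]) : PowerSeries K)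
        = ∏ k ∈ s, ((1 - C (d k - 1) * X : K[X]) : PowerSeries K) := by
      simp only [← Polynomial.coeToPowerSeries.ringHom_apply, map_prod]
    have hp : ((∑ k ∈ s, C (c k) * ∏ j ∈ s.erase k, (1 - C (d j - 1) * X) : K[X]) :
          PowerSeries K)
        = ∑ k ∈ s, ((C (c k) : K[X]) : PowerSeries K) *
            ∏ j ∈ s.erase k, ((1 - C (d j - 1) * X : K[X]) : PowerSeries K) := by
      simp only [← Polynomial.coeToPowerSeries.ringHom_apply, map_sum, _root_.map_mul, map_prod]
    rw [hmk, Finset.mul_sum, hq, hp]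
    refine Finset.sum_congr rfl fun k hk => ?_
    rw [← Finset.mul_prod_erase _ _ hk,
      mul_comm ((1 - C (d k - 1) * X : K[X]) : PowerSeries K), mul_assoc, geom_series,
      mul_comm]
end

section
/- Let m ≥ 1 and let Z be an m×m matrix of natural numbers that is transitive (Z_{ij} ≥ 1 and Z_{jk} ≥ 1 imply Z_{ik} ≥ 1) and whose diagonal entries all satisfy Z_{ii} ≥ 2. Then Z is the matrix of a category: there exists a category structure on the set of objects {1, …, m} with finite hom-sets such that for all i, j the number of arrows from i to j equals Z_{ij}. -/
/-!
Take `Fin (Z i j)` as the arrows `i ⟶ j`, let `1 : i ⟶ i` be the identity of `i`, and declare every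
composite of two non-identity arrows to be `0`. Transitivity of `Z` guarantees that `0` exists
wherever such a composite is needed, and `Z i i ≥ 2` keeps `0 : i ⟶ i` distinct from the identity,
so a composite of three arrows none of which is an identity is `0` however it is bracketed.
-/

open CategoryTheory

namespace Matrix

variable {ι : Type*} [DecidableEq ι] (Z : Matrix ι ι ℕ)
  (htrans : ∀ i j k, 1 ≤ Z i j → 1 ≤ Z j k → 1 ≤ Z i k)

def zeroComp {i j k : ι} (f : Fin (Z i j)) (g : Fin (Z j k)) : Fin (Z i k) :=
  if h : i = j ∧ f.val = 1 then Fin.cast (by rw [h.1]) g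
  else if h' : j = k ∧ g.val = 1 then Fin.cast (by rw [h'.1]) f
  else ⟨0, htrans i j k f.pos g.pos⟩

lemma zeroComp_val {i j k : ι} (f : Fin (Z i j)) (g : Fin (Z j k)) :
    (zeroComp Z htrans f g).val =
      if i = j ∧ f.val = 1 then g.val else if j = k ∧ g.val = 1 then f.val else 0 := by
  unfold zeroComp
  split_ifs <;> rfl

lemma zeroComp_assoc {i j k l : ι} (f : Fin (Z i j)) (g : Fin (Z j k)) (h : Fin (Z k l)) :
    zeroComp Z htrans (zeroComp Z htrans f g) h = zeroComp Z htrans f (zeroComp Z htrans g h) := by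
  ext
  simp only [zeroComp_val]
  split_ifs <;> simp_all

abbrev zeroCompCategory (hdiag : ∀ i, 2 ≤ Z i i) : Category.{0} ι where
  Hom i j := Fin (Z i j)
  id i := ⟨1, hdiag i⟩
  comp := zeroComp Z htrans
  id_comp f := Fin.ext <| by simp [zeroComp_val]
  comp_id f := Fin.ext <| by simp +contextual [zeroComp_val]
  assoc := zeroComp_assoc Z htrans

end Matrix

theorem stmt16_general (m : ℕ) (Z : Matrix (Fin m) (Fin m) ℕ)
    (htrans : ∀ i j k : Fin m, 1 ≤ Z i j → 1 ≤ Z j k → 1 ≤ Z i k)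
    (hdiag : ∀ i : Fin m, 2 ≤ Z i i) :
    ∃ inst : Category.{0} (Fin m),
      ∀ i j : Fin m,
        Finite (@Quiver.Hom (Fin m) inst.toCategoryStruct.toQuiver i j) ∧
        Nat.card (@Quiver.Hom (Fin m) inst.toCategoryStruct.toQuiver i j) = Z i j :=
  ⟨Z.zeroCompCategory htrans hdiag, fun i j => ⟨Finite.of_fintype (Fin (Z i j)), Nat.card_fin _⟩⟩

theorem stmt16 (m : ℕ) (hm : 1 ≤ m) (Z : Matrix (Fin m) (Fin m) ℕ)
    (htrans : ∀ i j k : Fin m, 1 ≤ Z i j → 1 ≤ Z j k → 1 ≤ Z i k)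
    (hdiag : ∀ i : Fin m, 2 ≤ Z i i) :
    ∃ inst : Category.{0} (Fin m),
      ∀ i j : Fin m,
        Finite (@Quiver.Hom (Fin m) inst.toCategoryStruct.toQuiver i j) ∧
        Nat.card (@Quiver.Hom (Fin m) inst.toCategoryStruct.toQuiver i j) = Z i j :=
  stmt16_general m Z htrans hdiag
end

section
/- Let m ≥ 1 and let Z be an m×m matrix of positive integers whose diagonal entries all satisfy Z_{ii} ≥ 2. Then Z is the matrix of a category: there exists a category structure on the set of objects {1, …, m} with finite hom-sets such that for all i, j the number of arrows from i to j equals Z_{ij}. -/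
/-!
Adjoin formal identities to arbitrary families of arrows, each family containing a designated
zero arrow, and declare every composite of two non-identity arrows to be the zero arrow. Any
bracketing of a triple composite containing at least two non-identities is then zero, so the
composition is associative. Taking `Z i j - [i = j] ≥ 1` non-identity arrows from `i` to `j`
gives `Z i j` arrows in total.
-/

open CategoryTheory

universe u v

namespace CategoryTheory.ZeroComposites

variable {C : Type u} (P : C → C → Type v) (zero : ∀ i j, P i j)

/-- The left summand is the formal identity, inhabited exactly when `i = j`. -/
abbrev Hom (i j : C) : Type v := PLift (i = j) ⊕ P i j

def comp : {i j k : C} → Hom P i j → Hom P j k → Hom P i k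
  | _, _, _, .inl ⟨rfl⟩, g => g
  | _, _, _, .inr f, .inl ⟨rfl⟩ => .inr f
  | i, _, k, .inr _, .inr _ => .inr (zero i k)

@[reducible]
def category : Category.{v} C where
  Hom := Hom P
  id _ := .inl ⟨rfl⟩
  comp := comp P zero
  id_comp _ := rfl
  comp_id f := by rcases f with ⟨⟨rfl⟩⟩ | f <;> rfl
  assoc f g h := by
    rcases f with ⟨⟨rfl⟩⟩ | f
    · rfl
    rcases g with ⟨⟨rfl⟩⟩ | g
    · rfl
    rcases h with ⟨⟨rfl⟩⟩ | h <;> rfl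

theorem natCard_hom [DecidableEq C] (i j : C) [Finite (P i j)] :
    Nat.card (Hom P i j) = (if i = j then 1 else 0) + Nat.card (P i j) := by
  rw [Nat.card_sum]
  split_ifs with h <;> simp [h]

end CategoryTheory.ZeroComposites

theorem stmt17_general (m : ℕ) (Z : Matrix (Fin m) (Fin m) ℕ)
    (hpos : ∀ i j : Fin m, 1 ≤ Z i j)
    (hdiag : ∀ i : Fin m, 2 ≤ Z i i) :
    ∃ inst : Category.{0} (Fin m),
      ∀ i j : Fin m,
        Finite (@Quiver.Hom (Fin m) inst.toCategoryStruct.toQuiver i j) ∧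
        Nat.card (@Quiver.Hom (Fin m) inst.toCategoryStruct.toQuiver i j) = Z i j := by
  have hid : ∀ i j, (if i = j then 1 else 0) < Z i j := fun i j => by
    split_ifs with h
    · exact h ▸ hdiag i
    · exact hpos i j
  let P : Fin m → Fin m → Type := fun i j => Fin (Z i j - if i = j then 1 else 0)
  refine ⟨ZeroComposites.category P fun i j => ⟨0, Nat.sub_pos_of_lt (hid i j)⟩,
    fun i j => ⟨inferInstanceAs (Finite (ZeroComposites.Hom P i j)), ?_⟩⟩
  change Nat.card (ZeroComposites.Hom P i j) = _
  rw [ZeroComposites.natCard_hom, Nat.card_eq_fintype_card, Fintype.card_fin]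
  exact Nat.add_sub_of_le (hid i j).le

theorem stmt17 (m : ℕ) (hm : 1 ≤ m) (Z : Matrix (Fin m) (Fin m) ℕ)
    (hpos : ∀ i j : Fin m, 1 ≤ Z i j)
    (hdiag : ∀ i : Fin m, 2 ≤ Z i i) :
    ∃ inst : Category.{0} (Fin m),
      ∀ i j : Fin m,
        Finite (@Quiver.Hom (Fin m) inst.toCategoryStruct.toQuiver i j) ∧
        Nat.card (@Quiver.Hom (Fin m) inst.toCategoryStruct.toQuiver i j) = Z i j :=
  stmt17_general m Z hpos hdiag
end

section
/- There is no category with two objects a, b (and finite hom-sets) such that |Hom(a,a)| = 1, |Hom(a,b)| = 2, |Hom(b,a)| = 1 and |Hom(b,b)| = 2. That is, the 2×2 matrix with rows (1, 2) and (1, 2) is not the matrix of a category. -/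
open CategoryTheory

lemma two_of_three {α : Type} [Finite α] (h : Nat.card α = 2) (x y z : α)
    (hx : x ≠ z) (hy : y ≠ z) : x = y := by
  classical
  by_contra hxy
  have : Fintype α := Fintype.ofFinite α
  have hcard : ({x, y, z} : Finset α).card = 3 := by
    rw [Finset.card_insert_of_notMem (by simp [hxy, hx]),
      Finset.card_insert_of_notMem (by simp [hy]), Finset.card_singleton]
  have hle : ({x, y, z} : Finset α).card ≤ Fintype.card α := Finset.card_le_univ _
  rw [hcard, ← Nat.card_eq_fintype_card, h] at hle
  omega

/-- The matrix with rows `(1, 2)` and `(1, 2)` is not the matrix of a category: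
there is no category with two objects `a = 0`, `b = 1` and finite hom-sets with
`|Hom(a,a)| = 1`, `|Hom(a,b)| = 2`, `|Hom(b,a)| = 1`, `|Hom(b,b)| = 2`. -/
theorem stmt18 :
    ¬ ∃ inst : Category.{0} (Fin 2),
      (∀ i j : Fin 2, Finite (@Quiver.Hom (Fin 2) inst.toCategoryStruct.toQuiver i j)) ∧
      Nat.card (@Quiver.Hom (Fin 2) inst.toCategoryStruct.toQuiver 0 0) = 1 ∧
      Nat.card (@Quiver.Hom (Fin 2) inst.toCategoryStruct.toQuiver 0 1) = 2 ∧
      Nat.card (@Quiver.Hom (Fin 2) inst.toCategoryStruct.toQuiver 1 0) = 1 ∧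
      Nat.card (@Quiver.Hom (Fin 2) inst.toCategoryStruct.toQuiver 1 1) = 2 := by
  rintro ⟨inst, hfin, h00, h01, h10, h11⟩
  haveI := hfin (0 : Fin 2) (0 : Fin 2)
  haveI := hfin (0 : Fin 2) (1 : Fin 2)
  haveI := hfin (1 : Fin 2) (0 : Fin 2)
  haveI := hfin (1 : Fin 2) (1 : Fin 2)
  -- Hom(0,0) is a subsingleton
  haveI hss : Subsingleton ((0 : Fin 2) ⟶ (0 : Fin 2)) :=
    (Nat.card_eq_one_iff_unique.mp h00).1
  -- Hom(1,0) is nonempty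
  obtain ⟨u⟩ : Nonempty ((1 : Fin 2) ⟶ (0 : Fin 2)) := by
    have : Nat.card ((1 : Fin 2) ⟶ (0 : Fin 2)) ≠ 0 := by rw [h10]; omega
    exact Nat.card_ne_zero.mp this |>.1
  -- Hom(0,1) is nontrivial
  haveI hnt : Nontrivial ((0 : Fin 2) ⟶ (1 : Fin 2)) := by
    rw [← Finite.one_lt_card_iff_nontrivial, h01]
    omega
  obtain ⟨f, g, hfg⟩ := hnt
  have key : ∀ p q : (0 : Fin 2) ⟶ (1 : Fin 2), u ≫ p = u ≫ q → p = q := by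
    intro p q h
    have h1 : p ≫ u = 𝟙 (0 : Fin 2) := Subsingleton.elim _ _
    calc p = (p ≫ u) ≫ p := by rw [h1]; simp
    _ = p ≫ (u ≫ p) := by rw [Category.assoc]
    _ = p ≫ (u ≫ q) := by rw [h]
    _ = (p ≫ u) ≫ q := by rw [Category.assoc]
    _ = q := by rw [h1]; simp
  have hne : ∀ p q : (0 : Fin 2) ⟶ (1 : Fin 2), p ≠ q → u ≫ p ≠ 𝟙 (1 : Fin 2) := by
    intro p q hpq h
    apply hpq
    have h2 : q ≫ u = 𝟙 (0 : Fin 2) := Subsingleton.elim _ _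
    calc p = (q ≫ u) ≫ p := by rw [h2]; simp
    _ = q ≫ (u ≫ p) := by rw [Category.assoc]
    _ = q := by rw [h]; simp
  exact hfg (key f g (two_of_three h11 (u ≫ f) (u ≫ g) (𝟙 1) (hne f g hfg) (hne g f (Ne.symm hfg))))
end
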